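/- Let a : ℕ → α be a sequence in the class 𝒞 and let P_a(n) denote the palindromic length of its prefix of length n. Then for every k ≥ 0: (1) P_a(4k+4) = P_a(k+1); (2) P_a(4k+3) = P_a(4k+4) + 1; (3) P_a(4k+2) − P_a(4k+4) is equal to 1 or 2; (4) P_a(4k+1) − P_a(4k+4) is equal to 0, 1 or 2. -/

import Mathlib

/-- Membership in the class 𝒞: there exist a letter `c`, bijections `f n`,
and words `w n` with `w 0 = [c]`,
`w (n+1) = w n ++ f n (w n) ++ f n (w n) ++ w n`, `f n (w n) ≠ w n`,
and `w n` is the prefix of `a` of length `4 ^ n`. -/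
def InC {α : Type*} (a : ℕ → α) : Prop :=
  ∃ (c : α) (f : ℕ → α ≃ α) (w : ℕ → List α),
    w 0 = [c] ∧
    (∀ n, w (n + 1) = w n ++ (w n).map (f n) ++ (w n).map (f n) ++ w n) ∧
    (∀ n, (w n).map (f n) ≠ w n) ∧
    (∀ n, w n = (List.range (4 ^ n)).map a)

/-- The factor `a(x) a(x+1) ⋯ a(x+y-1)` of the sequence `a`. -/
def factor {α : Type*} (a : ℕ → α) (x y : ℕ) : List α :=
  (List.range y).map (fun i => a (x + i))

/-- The prefix of `a` of length `n`. -/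
def prefixWord {α : Type*} (a : ℕ → α) (n : ℕ) : List α :=
  factor a 0 n

/-- The palindromic length of a finite word: the least number of palindromes
whose concatenation is the word (0 for the empty word). -/
noncomputable def palLen {α : Type*} (w : List α) : ℕ :=
  sInf {k | ∃ ps : List (List α),
    ps.length = k ∧ (∀ p ∈ ps, p.Palindrome) ∧ ps.flatten = w}

/-- `P a n` is the palindromic length of the prefix of `a` of length `n`. -/
noncomputable def P {α : Type*} (a : ℕ → α) (n : ℕ) : ℕ :=
  palLen (prefixWord a n)

/-- The factor of length `y` at position `x` is embedded into the center of the
factor of length `4 * r` at position `4 * z`. -/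
def EmbedCenter (x y z r : ℕ) : Prop :=
  4 * z ≤ x ∧ x + y ≤ 4 * z + 4 * r ∧ x - 4 * z = (4 * z + 4 * r) - (x + y)

/-- The Thue–Morse sequence: `true` iff the number of ones in the binary
expansion is odd. -/
def thueMorse (n : ℕ) : Bool :=
  (Nat.digits 2 n).count 1 % 2 == 1

/-!
In a sequence of class 𝒞 every aligned block `a(4m) … a(4m+3)` has the form `ABBA` with
`A ≠ B`, and the derived sequence of pairs `(A, B)` is again of class 𝒞. The `ABBA` shape
pins palindromes down: apart from single letters and some of length 3, a palindrome has
even length and is centred at the middle or at the end of a block, so after trimming it to,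
or extending it to, block boundaries it becomes a palindrome of the derived sequence `d`.
Comparing optimal factorizations then gives
`P_a(4m) = P_d(m)`, `P_a(4m+1) = P_d(m) + 1`, `P_a(4m+2) = min (P_d(m)) (P_d(m+1)) + 2` and
`P_a(4m+3) = P_d(m+1) + 1`. By induction on `n` these formulas show that `P_a(n)` is the same
for every sequence of class 𝒞, in particular `P_d = P_a`, and the theorem follows since
consecutive values of `P_d` differ by at most one.
-/

section

variable {α β : Type*}

theorem palLen_spec (w : List α) :
    ∃ ps : List (List α), ps.length = palLen w ∧ (∀ p ∈ ps, p.Palindrome) ∧ ps.flatten = w :=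
  Nat.sInf_mem (s := {k | ∃ ps : List (List α),
    ps.length = k ∧ (∀ p ∈ ps, p.Palindrome) ∧ ps.flatten = w})
    ⟨w.length, w.map ([·]), by simp, by simp [List.Palindrome.singleton],
      by simpa [List.flatMap] using w.flatMap_singleton'⟩

theorem palLen_nil : palLen ([] : List α) = 0 :=
  Nat.eq_zero_of_le_zero (Nat.sInf_le ⟨[], rfl, by simp, rfl⟩)

theorem palLen_append_le (w : List α) {p : List α} (hp : p.Palindrome) :
    palLen (w ++ p) ≤ palLen w + 1 := by
  obtain ⟨ps, hlen, hpal, rfl⟩ := palLen_spec w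
  refine Nat.sInf_le ⟨ps ++ [p], by simp [hlen], ?_, by simp⟩
  simpa [or_imp, forall_and] using ⟨hpal, hp⟩

theorem exists_palLen_eq_succ {w : List α} (hw : w ≠ []) :
    ∃ u p, u ++ p = w ∧ p ≠ [] ∧ p.Palindrome ∧ palLen w = palLen u + 1 := by
  obtain ⟨ps, hlen, hpal, hflat⟩ := palLen_spec w
  rcases ps.eq_nil_or_concat with rfl | ⟨qs, p, rfl⟩
  · exact absurd hflat.symm (by simpa using hw)
  simp only [List.concat_eq_append, List.length_append, List.length_singleton,
    List.flatten_append, List.flatten_singleton, List.mem_append, List.mem_singleton,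
    or_imp, forall_and, forall_eq] at hlen hpal hflat
  have hqs : palLen qs.flatten ≤ qs.length := Nat.sInf_le ⟨qs, rfl, hpal.1, rfl⟩
  have hp : p ≠ [] := by
    rintro rfl
    have : palLen w ≤ qs.length := Nat.sInf_le ⟨qs, rfl, hpal.1, by simpa using hflat⟩
    omega
  refine ⟨qs.flatten, p, hflat, hp, hpal.2, le_antisymm ?_ (by omega)⟩
  exact hflat ▸ palLen_append_le _ hpal.2

theorem List.flatten_map_injective {f : β → List α} (hf : Function.Injective f)
    (hlen : ∀ x y, (f x).length = (f y).length) {L₁ L₂ : List β} (hL : L₁.length = L₂.length)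
    (h : (L₁.map f).flatten = (L₂.map f).flatten) : L₁ = L₂ := by
  induction L₁ generalizing L₂ with
  | nil => simpa using hL.symm
  | cons x L₁ ih =>
    obtain _ | ⟨y, L₂⟩ := L₂
    · simp at hL
    obtain ⟨hxy, hrest⟩ := List.append_inj (by simpa using h) (hlen x y)
    rw [hf hxy, ih (by simpa using hL) hrest]

theorem List.palindrome_flatten_map_iff {f : β → List α} (hf : Function.Injective f)
    (hlen : ∀ x y, (f x).length = (f y).length) (hpal : ∀ x, (f x).Palindrome) {L : List β} :
    (L.map f).flatten.Palindrome ↔ L.Palindrome := by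
  have hrev : (L.map f).flatten.reverse = (L.reverse.map f).flatten := by
    have hf_rev : List.reverse ∘ f = f := funext fun x => (hpal x).reverse_eq
    simp [List.reverse_flatten, List.map_reverse, hf_rev]
  rw [List.Palindrome.iff_reverse_eq, List.Palindrome.iff_reverse_eq, hrev]
  exact ⟨List.flatten_map_injective hf hlen (by simp), fun h => by rw [h]⟩

section Factors

variable (a : ℕ → α)

@[simp] theorem length_factor (x y : ℕ) : (factor a x y).length = y := by
  simp [factor]

theorem factor_add (x y z : ℕ) : factor a x (y + z) = factor a x y ++ factor a (x + y) z := by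
  simp [factor, List.range_add, Nat.add_assoc]

theorem prefixWord_add (x y : ℕ) : prefixWord a (x + y) = prefixWord a x ++ factor a x y := by
  rw [prefixWord, prefixWord, factor_add, Nat.zero_add]

theorem factor_eq_factor_iff {b : ℕ → α} {x y n : ℕ} :
    factor a x n = factor b y n ↔ ∀ i < n, a (x + i) = b (y + i) := by
  simp [factor, List.ext_getElem_iff]

variable {a}

theorem factor_palindrome_iff {x y : ℕ} :
    (factor a x y).Palindrome ↔ ∀ i < y, a (x + i) = a (x + (y - 1 - i)) := by
  rw [List.Palindrome.iff_reverse_eq, List.ext_getElem_iff]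
  simp only [List.length_reverse, List.getElem_reverse, factor, List.length_map,
    List.length_range, List.getElem_map, List.getElem_range, true_and]
  exact ⟨fun h i hi => (h i hi hi).symm, fun h i hi _ => (h i hi).symm⟩

theorem factor_one_palindrome (x : ℕ) : (factor a x 1).Palindrome := by
  simp [factor, List.Palindrome.singleton]

theorem List.Palindrome.factor_trim {x y : ℕ} (h : (factor a x y).Palindrome) (t : ℕ) :
    (factor a (x + t) (y - 2 * t)).Palindrome := by
  rw [factor_palindrome_iff] at h ⊢
  intro i hi
  have := h (t + i) (by omega)
  rwa [← Nat.add_assoc, show y - 1 - (t + i) = t + (y - 2 * t - 1 - i) by omega,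
    ← Nat.add_assoc] at this

theorem List.Palindrome.factor_extend {x y : ℕ} (h : (factor a (x + 1) y).Palindrome)
    (hend : a x = a (x + y + 1)) : (factor a x (y + 2)).Palindrome := by
  rw [factor_palindrome_iff] at h ⊢
  intro i hi
  rcases i with _ | i
  · simpa [Nat.add_assoc] using hend
  rcases Nat.lt_or_ge i y with hiy | hiy
  · convert h i hiy using 2 <;> omega
  · obtain rfl : i = y := by omega
    simpa [Nat.add_assoc] using hend.symm

end Factors

theorem P_zero (a : ℕ → α) : P a 0 = 0 := palLen_nil

theorem P_add_le_of_palindrome {a : ℕ → α} {x y : ℕ} (h : (factor a x y).Palindrome) :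
    P a (x + y) ≤ P a x + 1 := by
  rw [P, prefixWord_add]
  exact palLen_append_le _ h

theorem exists_P_eq_succ (a : ℕ → α) {n : ℕ} (hn : 0 < n) :
    ∃ x < n, (factor a x (n - x)).Palindrome ∧ P a n = P a x + 1 := by
  have hne : prefixWord a n ≠ [] := List.ne_nil_of_length_pos (by simpa [prefixWord] using hn)
  obtain ⟨u, p, hup, hp, hpal, hlen⟩ := exists_palLen_eq_succ hne
  have hsplit := prefixWord_add a u.length (n - u.length)
  have hlt : u.length < n := by
    have := congrArg List.length hup
    simp only [List.length_append, prefixWord, length_factor] at this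
    have := List.length_pos_of_ne_nil hp
    omega
  rw [Nat.add_sub_cancel' hlt.le, ← hup] at hsplit
  obtain ⟨hu, rfl⟩ := List.append_inj hsplit (by simp [prefixWord])
  exact ⟨u.length, hlt, hpal, by rw [P, hlen, P, ← hu]⟩

theorem P_succ_le (a : ℕ → α) (n : ℕ) : P a (n + 1) ≤ P a n + 1 :=
  P_add_le_of_palindrome (factor_one_palindrome n)

theorem P_add_le (a : ℕ → α) (x t : ℕ) : P a (x + t) ≤ P a x + t := by
  induction t with
  | zero => rfl
  | succ t ih => exact (P_succ_le a (x + t)).trans (by omega)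

theorem P_le_of_palindrome_trim {a : ℕ → α} {x y : ℕ} (h : (factor a x y).Palindrome) (t : ℕ) :
    P a (x + t + (y - 2 * t)) ≤ P a x + t + 1 :=
  (P_add_le_of_palindrome (h.factor_trim t)).trans (by have := P_add_le a x t; omega)

theorem P_le_P_succ_add_one (a : ℕ → α) (n : ℕ) : P a n ≤ P a (n + 1) + 1 := by
  obtain ⟨x, hx, hpal, heq⟩ := exists_P_eq_succ a (by omega : 0 < n + 1)
  rcases Nat.lt_or_ge x n with hxn | hxn
  · have := P_le_of_palindrome_trim hpal 1
    rw [show x + 1 + (n + 1 - x - 2 * 1) = n by omega] at this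
    omega
  · obtain rfl : x = n := by omega
    omega

theorem P_one (a : ℕ → α) : P a 1 = 1 := by
  obtain ⟨x, hx, -, heq⟩ := exists_P_eq_succ a Nat.one_pos
  obtain rfl : x = 0 := by omega
  rw [heq, P_zero]

theorem exists_eq_four_mul_add (n : ℕ) : ∃ m r, r < 4 ∧ n = 4 * m + r :=
  ⟨n / 4, n % 4, Nat.mod_lt n (by norm_num), (Nat.div_add_mod n 4).symm⟩

section ABBA

def IsABBA (b : ℕ → α) : Prop :=
  ∀ m, b (4 * m + 3) = b (4 * m) ∧ b (4 * m + 2) = b (4 * m + 1) ∧ b (4 * m) ≠ b (4 * m + 1)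

def derivedSeq (b : ℕ → α) (m : ℕ) : α × α := (b (4 * m), b (4 * m + 1))

def abba (c : α × α) : List α := [c.1, c.2, c.2, c.1]

theorem abba_injective : Function.Injective (abba : α × α → List α) := by
  rintro ⟨x, y⟩ ⟨x', y'⟩ h
  simp_all [abba]

theorem abba_palindrome (c : α × α) : (abba c).Palindrome :=
  List.Palindrome.of_reverse_eq (by simp [abba])

variable {b : ℕ → α}

theorem IsABBA.odd_of_eq_succ (hb : IsABBA b) {q : ℕ} (h : b q = b (q + 1)) : q % 2 = 1 := by
  obtain ⟨m, r, hr, rfl⟩ := exists_eq_four_mul_add q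
  obtain ⟨h3, h2, hne⟩ := hb m
  interval_cases r
  · exact absurd h hne
  · omega
  · exact absurd (h2.symm.trans (h.trans h3)).symm hne
  · omega

theorem IsABBA.eq_succ_of_mod_four_eq_one (hb : IsABBA b) {q : ℕ} (hq : q % 4 = 1) :
    b q = b (q + 1) := by
  obtain ⟨m, rfl⟩ : ∃ m, q = 4 * m + 1 := ⟨q / 4, by omega⟩
  exact (hb m).2.1.symm

theorem IsABBA.factor_four_mul_eq_flatten (hb : IsABBA b) (p l : ℕ) :
    factor b (4 * p) (4 * l) = ((factor (derivedSeq b) p l).map abba).flatten := by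
  induction l with
  | zero => simp [factor]
  | succ l ih =>
    have hblock : factor b (4 * (p + l)) 4 = abba (derivedSeq b (p + l)) := by
      simp [factor, List.range_succ, abba, derivedSeq, (hb (p + l)).1, (hb (p + l)).2.1]
    rw [Nat.mul_succ, factor_add, ih, ← Nat.mul_add, hblock, factor_add]
    simp [factor]

theorem IsABBA.palindrome_factor_four_mul_iff (hb : IsABBA b) {p l : ℕ} :
    (factor b (4 * p) (4 * l)).Palindrome ↔ (factor (derivedSeq b) p l).Palindrome := by
  rw [hb.factor_four_mul_eq_flatten]
  exact List.palindrome_flatten_map_iff abba_injective (fun _ _ => rfl) abba_palindrome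

theorem IsABBA.palindrome_cases (hb : IsABBA b) {x y : ℕ} (hpal : (factor b x y).Palindrome)
    (hy : 2 ≤ y) : (y % 2 = 0 ∧ (2 * x + y) % 4 = 0) ∨ (y = 3 ∧ 2 ≤ x % 4) := by
  rw [factor_palindrome_iff] at hpal
  rcases Nat.even_or_odd' y with ⟨h, rfl | rfl⟩
  · have hcenter : b (x + h - 1) = b (x + h - 1 + 1) := by
      convert hpal (h - 1) (by omega) using 2 <;> omega
    have := hb.odd_of_eq_succ hcenter
    omega
  · -- the pair `b (4m+1) = b (4m+2)` inside an odd palindrome has a mirror image at an even index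
    have hno_pair : ∀ q, x ≤ q → q + 2 ≤ x + (2 * h + 1) → q % 4 ≠ 1 := by
      intro q hxq hqy hq
      have h1 : b q = b (2 * x + 2 * h - 1 - q + 1) := by
        convert hpal (q - x) (by omega) using 2 <;> omega
      have h2 : b (q + 1) = b (2 * x + 2 * h - 1 - q) := by
        convert hpal (q + 1 - x) (by omega) using 2 <;> omega
      have := hb.odd_of_eq_succ (h2.symm.trans ((hb.eq_succ_of_mod_four_eq_one hq).symm.trans h1))
      omega
    have := hno_pair x; have := hno_pair (x + 1); have := hno_pair (x + 2)
    have := hno_pair (x + 3)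
    omega

-- An even palindrome centred at an even index starts at some `4p + s` (`s < 4`) and has length
-- `4l + 4 - 2s`. Its core `[4(p+1), 4(p+l))` and, when `s ≤ 2`, its hull `[4p, 4(p+l+1))`
-- consist of whole blocks and are palindromes.
theorem IsABBA.palindrome_core (hb : IsABBA b) {p s l : ℕ} (hs : s < 4)
    (hpal : (factor b (4 * p + s) (4 * l + 4 - 2 * s)).Palindrome) :
    (factor (derivedSeq b) (p + 1) (l - 1)).Palindrome := by
  have := hpal.factor_trim (4 - s)
  rwa [show 4 * p + s + (4 - s) = 4 * (p + 1) by omega,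
    show 4 * l + 4 - 2 * s - 2 * (4 - s) = 4 * (l - 1) by omega,
    hb.palindrome_factor_four_mul_iff] at this

theorem IsABBA.palindrome_hull (hb : IsABBA b) {p s l : ℕ} (hs : s ≤ 2)
    (hpal : (factor b (4 * p + s) (4 * l + 4 - 2 * s)).Palindrome) :
    (factor (derivedSeq b) p (l + 1)).Palindrome := by
  rcases l.eq_zero_or_pos with rfl | hl
  · exact factor_one_palindrome p
  have h2 := factor_palindrome_iff.1 hpal (2 - s) (by omega)
  have h3 := factor_palindrome_iff.1 hpal (3 - s) (by omega)
  rw [show 4 * p + s + (2 - s) = 4 * p + 2 by omega,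
    show 4 * p + s + (4 * l + 4 - 2 * s - 1 - (2 - s)) = 4 * (p + l) + 1 by omega,
    (hb p).2.1] at h2
  rw [show 4 * p + s + (3 - s) = 4 * p + 3 by omega,
    show 4 * p + s + (4 * l + 4 - 2 * s - 1 - (3 - s)) = 4 * (p + l) by omega,
    (hb p).1] at h3
  have hends : derivedSeq b p = derivedSeq b (p + (l - 1) + 1) := by
    rw [show p + (l - 1) + 1 = p + l by omega]
    exact Prod.ext h3 h2
  have := (hb.palindrome_core (by omega) hpal).factor_extend hends
  rwa [show l - 1 + 2 = l + 1 by omega] at this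

end ABBA

section BlockLift

def blockLift (R : ℕ → ℕ) (n : ℕ) : ℕ :=
  if n % 4 = 0 then R (n / 4)
  else if n % 4 = 1 then R (n / 4) + 1
  else if n % 4 = 2 then min (R (n / 4)) (R (n / 4 + 1)) + 2
  else R (n / 4 + 1) + 1

variable (R : ℕ → ℕ) (m : ℕ)

@[simp] theorem blockLift_four_mul : blockLift R (4 * m) = R m := by
  simp [blockLift]

@[simp] theorem blockLift_four_mul_add_one : blockLift R (4 * m + 1) = R m + 1 := by
  simp [blockLift, show (4 * m + 1) / 4 = m by omega, show (4 * m + 1) % 4 = 1 by omega]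

@[simp] theorem blockLift_four_mul_add_two :
    blockLift R (4 * m + 2) = min (R m) (R (m + 1)) + 2 := by
  simp [blockLift, show (4 * m + 2) / 4 = m by omega, show (4 * m + 2) % 4 = 2 by omega]

@[simp] theorem blockLift_four_mul_add_three : blockLift R (4 * m + 3) = R (m + 1) + 1 := by
  simp [blockLift, show (4 * m + 3) / 4 = m by omega, show (4 * m + 3) % 4 = 3 by omega]

variable {R}

theorem blockLift_congr {R' : ℕ → ℕ} {n : ℕ} (h₀ : R (n / 4) = R' (n / 4))
    (h₁ : R (n / 4 + 1) = R' (n / 4 + 1)) : blockLift R n = blockLift R' n := by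
  simp only [blockLift, h₀, h₁]

theorem blockLift_succ_le (hR : ∀ m, R (m + 1) ≤ R m + 1) (n : ℕ) :
    blockLift R (n + 1) ≤ blockLift R n + 1 := by
  obtain ⟨m, r, hr, rfl⟩ := exists_eq_four_mul_add n
  have := hR m
  interval_cases r <;> simp [show 4 * m + 3 + 1 = 4 * (m + 1) by ring] <;> omega

theorem blockLift_add_three_le (hR : ∀ m, R (m + 1) ≤ R m + 1) {x : ℕ} (hx : 2 ≤ x % 4) :
    blockLift R (x + 3) ≤ blockLift R x + 1 := by
  obtain ⟨p, s, hs, rfl⟩ : ∃ p s, s < 2 ∧ x = 4 * p + 2 + s :=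
    ⟨x / 4, x % 4 - 2, by omega, by omega⟩
  have := hR p
  interval_cases s
  · rw [show 4 * p + 2 + 0 + 3 = 4 * (p + 1) + 1 by ring]
    simp
    omega
  · rw [show 4 * p + 2 + 1 + 3 = 4 * (p + 1) + 2 by ring, show 4 * p + 2 + 1 = 4 * p + 3 by ring]
    simp

end BlockLift

section PalLenOfABBA

variable {b : ℕ → α}

theorem IsABBA.P_four_mul_le (hb : IsABBA b) (m : ℕ) : P b (4 * m) ≤ P (derivedSeq b) m := by
  induction m using Nat.strong_induction_on with
  | _ m ih =>
  rcases m.eq_zero_or_pos with rfl | hm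
  · simp [P_zero]
  obtain ⟨p, hp, hpal, heq⟩ := exists_P_eq_succ (derivedSeq b) hm
  calc P b (4 * m) = P b (4 * p + 4 * (m - p)) := by rw [← Nat.mul_add, Nat.add_sub_cancel' hp.le]
    _ ≤ P b (4 * p) + 1 := P_add_le_of_palindrome (hb.palindrome_factor_four_mul_iff.2 hpal)
    _ ≤ P (derivedSeq b) p + 1 := Nat.add_le_add_right (ih p hp) 1
    _ = P (derivedSeq b) m := heq.symm

theorem IsABBA.P_le_blockLift (hb : IsABBA b) (n : ℕ) :
    P b n ≤ blockLift (P (derivedSeq b)) n := by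
  obtain ⟨m, r, hr, rfl⟩ := exists_eq_four_mul_add n
  have h₀ := hb.P_four_mul_le m
  have h₁ := P_add_le b (4 * m)
  -- the last palindrome of the derived prefix of length `m + 1`, inflated and then trimmed
  obtain ⟨p, hp, hpal, heq⟩ := exists_P_eq_succ (derivedSeq b) (by omega : 0 < m + 1)
  have hinfl := hb.palindrome_factor_four_mul_iff.2 hpal
  have hp₀ := hb.P_four_mul_le p
  have h₂ := P_le_of_palindrome_trim hinfl 2
  have h₃ := P_le_of_palindrome_trim hinfl 1
  rw [show 4 * p + 2 + (4 * (m + 1 - p) - 2 * 2) = 4 * m + 2 by omega] at h₂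
  rw [show 4 * p + 1 + (4 * (m + 1 - p) - 2 * 1) = 4 * m + 3 by omega] at h₃
  interval_cases r
  · simpa using h₀
  · have := h₁ 1; simp; omega
  · have := h₁ 2; simp; omega
  · simp; omega

theorem IsABBA.blockLift_le_of_palindrome_centred (hb : IsABBA b) {p s l : ℕ} (hs : s < 4)
    (hpal : (factor b (4 * p + s) (4 * l + 4 - 2 * s)).Palindrome) :
    blockLift (P (derivedSeq b)) (4 * p + s + (4 * l + 4 - 2 * s)) ≤
      blockLift (P (derivedSeq b)) (4 * p + s) + 1 := by
  have hcore := P_add_le_of_palindrome (hb.palindrome_core hs hpal)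
  have hhull : s ≤ 2 → P (derivedSeq b) (p + l + 1) ≤ P (derivedSeq b) p + 1 := fun hs₂ =>
    P_add_le_of_palindrome (hb.palindrome_hull hs₂ hpal)
  interval_cases s
  · rw [show 4 * p + 0 + (4 * l + 4 - 2 * 0) = 4 * (p + l + 1) by omega]
    simpa using hhull (by norm_num)
  · rw [show 4 * p + 1 + (4 * l + 4 - 2 * 1) = 4 * (p + l) + 3 by omega]
    simpa using hhull (by norm_num)
  · rcases l.eq_zero_or_pos with rfl | hl
    · simp
    rw [show 4 * p + 2 + (4 * l + 4 - 2 * 2) = 4 * (p + l) + 2 by omega]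
    rw [show p + 1 + (l - 1) = p + l by omega] at hcore
    have := hhull (by norm_num)
    simp
    omega
  · rcases l.eq_zero_or_pos with rfl | hl
    · simp
    rw [show 4 * p + 3 + (4 * l + 4 - 2 * 3) = 4 * (p + l) + 1 by omega]
    rw [show p + 1 + (l - 1) = p + l by omega] at hcore
    simpa using hcore

theorem IsABBA.blockLift_le_of_palindrome (hb : IsABBA b) {x y : ℕ} (hy : 0 < y)
    (hpal : (factor b x y).Palindrome) :
    blockLift (P (derivedSeq b)) (x + y) ≤ blockLift (P (derivedSeq b)) x + 1 := by
  rcases Nat.lt_or_ge y 2 with hy₁ | hy₂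
  · obtain rfl : y = 1 := by omega
    exact blockLift_succ_le (P_succ_le _) x
  rcases hb.palindrome_cases hpal hy₂ with ⟨hev, hctr⟩ | ⟨rfl, hx⟩
  · obtain ⟨p, s, l, hs, rfl, rfl⟩ : ∃ p s l, s < 4 ∧ x = 4 * p + s ∧ y = 4 * l + 4 - 2 * s :=
      ⟨x / 4, x % 4, (y + 2 * (x % 4)) / 4 - 1, by omega, by omega, by omega⟩
    exact hb.blockLift_le_of_palindrome_centred hs hpal
  · exact blockLift_add_three_le (P_succ_le _) hx

theorem IsABBA.blockLift_le_P (hb : IsABBA b) (n : ℕ) :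
    blockLift (P (derivedSeq b)) n ≤ P b n := by
  induction n using Nat.strong_induction_on with
  | _ n ih =>
  rcases n.eq_zero_or_pos with rfl | hn
  · simp [blockLift, P_zero]
  obtain ⟨x, hx, hpal, heq⟩ := exists_P_eq_succ b hn
  calc blockLift (P (derivedSeq b)) n = blockLift (P (derivedSeq b)) (x + (n - x)) := by
        rw [Nat.add_sub_cancel' hx.le]
    _ ≤ blockLift (P (derivedSeq b)) x + 1 := hb.blockLift_le_of_palindrome (by omega) hpal
    _ ≤ P b x + 1 := Nat.add_le_add_right (ih x hx) 1
    _ = P b n := heq.symm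

theorem IsABBA.P_eq_blockLift (hb : IsABBA b) (n : ℕ) :
    P b n = blockLift (P (derivedSeq b)) n :=
  le_antisymm (hb.P_le_blockLift n) (hb.blockLift_le_P n)

end PalLenOfABBA

def SelfSimilar (b : ℕ → α) (f : ℕ → α ≃ α) : Prop :=
  ∀ n, ∀ i < 4 ^ n, b (4 ^ n + i) = f n (b i) ∧ b (2 * 4 ^ n + i) = f n (b i) ∧
    b (3 * 4 ^ n + i) = b i

theorem map_range_four_mul_eq_iff {u : ℕ → α} {g : α → α} {N : ℕ} :
    (List.range (4 * N)).map u = (List.range N).map u ++ ((List.range N).map u).map g ++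
      ((List.range N).map u).map g ++ (List.range N).map u ↔
    ∀ i < N, u (N + i) = g (u i) ∧ u (2 * N + i) = g (u i) ∧ u (3 * N + i) = u i := by
  have hfactor : ∀ (v : ℕ → α) M, (List.range M).map v = factor v 0 M := by simp [factor]
  have hsplit : (List.range (4 * N)).map u =
      factor u 0 N ++ factor u N N ++ factor u (2 * N) N ++ factor u (3 * N) N := by
    rw [hfactor, show 4 * N = N + N + N + N by ring, factor_add, factor_add, factor_add]
    simp only [Nat.zero_add, two_mul, show 3 * N = N + N + N by ring]
  rw [hsplit, List.map_map, hfactor, hfactor]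
  constructor
  · intro h
    obtain ⟨h₁₂₃, h₄⟩ := List.append_inj h (by simp)
    obtain ⟨h₁₂, h₃⟩ := List.append_inj h₁₂₃ (by simp)
    obtain ⟨-, h₂⟩ := List.append_inj h₁₂ (by simp)
    simp only [factor_eq_factor_iff, Nat.zero_add, Function.comp_apply] at h₂ h₃ h₄
    exact fun i hi => ⟨h₂ i hi, h₃ i hi, h₄ i hi⟩
  · intro h
    have e : ∀ x (v : ℕ → α), (∀ i < N, u (x + i) = v i) → factor u x N = factor v 0 N :=
      fun x v hv => (factor_eq_factor_iff u).2 (by simpa using hv)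
    rw [e N (g ∘ u) (fun i hi => (h i hi).1), e (2 * N) (g ∘ u) (fun i hi => (h i hi).2.1),
      e (3 * N) u (fun i hi => (h i hi).2.2)]

theorem inC_iff {b : ℕ → α} :
    InC b ↔ ∃ f : ℕ → α ≃ α, SelfSimilar b f ∧ ∀ n, ∃ i < 4 ^ n, f n (b i) ≠ b i := by
  have hstep : ∀ (g : α ≃ α) n,
      (List.range (4 ^ (n + 1))).map b = (List.range (4 ^ n)).map b ++
        ((List.range (4 ^ n)).map b).map g ++ ((List.range (4 ^ n)).map b).map g ++
        (List.range (4 ^ n)).map b ↔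
      ∀ i < 4 ^ n, b (4 ^ n + i) = g (b i) ∧ b (2 * 4 ^ n + i) = g (b i) ∧
        b (3 * 4 ^ n + i) = b i := fun g n => by
    rw [pow_succ, mul_comm]
    exact map_range_four_mul_eq_iff
  have hmoves : ∀ (g : α ≃ α) n,
      ((List.range (4 ^ n)).map b).map g ≠ (List.range (4 ^ n)).map b ↔
        ∃ i < 4 ^ n, g (b i) ≠ b i := fun g n => by
    simp [List.map_map]
  constructor
  · rintro ⟨c, f, w, -, hrec, hne, hw⟩
    refine ⟨f, fun n => (hstep (f n) n).1 ?_, fun n => (hmoves (f n) n).1 ?_⟩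
    · rw [← hw, ← hw, hrec]
    · rw [← hw]
      exact hne n
  · rintro ⟨f, hself, hne⟩
    exact ⟨b 0, f, fun n => (List.range (4 ^ n)).map b, by simp,
      fun n => (hstep (f n) n).2 (hself n), fun n => (hmoves (f n) n).2 (hne n), fun _ => rfl⟩

theorem SelfSimilar.exists_equiv_block {b : ℕ → α} {f : ℕ → α ≃ α} (h : SelfSimilar b f)
    (m n : ℕ) : ∃ g : α ≃ α, ∀ i < 4 ^ n, b (4 ^ n * m + i) = g (b i) := by
  induction m using Nat.strong_induction_on generalizing n with
  | _ m ih =>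
  rcases m.eq_zero_or_pos with rfl | hm
  · exact ⟨Equiv.refl α, fun i _ => by simp⟩
  obtain ⟨q, d, hd, rfl⟩ := exists_eq_four_mul_add m
  obtain ⟨g, hg⟩ := ih q (by omega) (n + 1)
  -- the `d`-th quarter of a block of length `4 ^ (n + 1)`
  obtain ⟨e, he⟩ : ∃ e : α ≃ α, ∀ i < 4 ^ n, b (d * 4 ^ n + i) = e (b i) := by
    interval_cases d
    · exact ⟨Equiv.refl α, fun i _ => by simp⟩
    · exact ⟨f n, fun i hi => by simpa using (h n i hi).1⟩
    · exact ⟨f n, fun i hi => (h n i hi).2.1⟩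
    · exact ⟨Equiv.refl α, fun i hi => (h n i hi).2.2⟩
  refine ⟨e.trans g, fun i hi => ?_⟩
  have hlt : d * 4 ^ n + i < 4 ^ (n + 1) := by rw [pow_succ]; nlinarith
  rw [show 4 ^ n * (4 * q + d) + i = 4 ^ (n + 1) * q + (d * 4 ^ n + i) by ring, hg _ hlt,
    he i hi, Equiv.trans_apply]

theorem InC.isABBA {b : ℕ → α} (hC : InC b) : IsABBA b := by
  obtain ⟨f, hself, hne⟩ := inC_iff.1 hC
  obtain ⟨i, hi, hmove⟩ := hne 0
  obtain rfl : i = 0 := by simpa using hi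
  obtain ⟨h₁, h₂, h₃⟩ := hself 0 0 (by norm_num)
  intro m
  obtain ⟨g, hg⟩ := hself.exists_equiv_block m 1
  simp only [pow_one, pow_zero, mul_one, Nat.add_zero] at hg h₁ h₂ h₃
  have hg₀ : b (4 * m) = g (b 0) := by simpa using hg 0 (by norm_num)
  rw [hg 3 (by norm_num), hg 2 (by norm_num), hg 1 (by norm_num), hg₀, h₁, h₂, h₃]
  exact ⟨rfl, rfl, g.injective.ne (Ne.symm hmove)⟩

theorem InC.inC_derivedSeq {b : ℕ → α} (hC : InC b) : InC (derivedSeq b) := by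
  have hb := hC.isABBA
  obtain ⟨f, hself, hne⟩ := inC_iff.1 hC
  refine inC_iff.2 ⟨fun n => (f (n + 1)).prodCongr (f (n + 1)), fun n i hi => ?_, fun n => ?_⟩
  · have key : ∀ j < 2, b (4 * (4 ^ n + i) + j) = f (n + 1) (b (4 * i + j)) ∧
        b (4 * (2 * 4 ^ n + i) + j) = f (n + 1) (b (4 * i + j)) ∧
        b (4 * (3 * 4 ^ n + i) + j) = b (4 * i + j) := fun j hj => by
      have := hself (n + 1) (4 * i + j) (by rw [pow_succ]; omega)
      rwa [show 4 * (4 ^ n + i) + j = 4 ^ (n + 1) + (4 * i + j) by ring,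
        show 4 * (2 * 4 ^ n + i) + j = 2 * 4 ^ (n + 1) + (4 * i + j) by ring,
        show 4 * (3 * 4 ^ n + i) + j = 3 * 4 ^ (n + 1) + (4 * i + j) by ring]
    obtain ⟨h₁, h₂, h₃⟩ := key 0 (by norm_num)
    obtain ⟨h₁', h₂', h₃'⟩ := key 1 (by norm_num)
    simp only [Nat.add_zero] at h₁ h₂ h₃
    simp only [derivedSeq, Equiv.prodCongr_apply, Prod.map, h₁, h₂, h₃, h₁', h₂', h₃', and_self]
  · obtain ⟨i, hi, hmove⟩ := hne (n + 1)
    obtain ⟨q, r, hr, rfl⟩ := exists_eq_four_mul_add i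
    refine ⟨q, by rw [pow_succ] at hi; omega, fun hfix => hmove ?_⟩
    simp only [derivedSeq, Equiv.prodCongr_apply, Prod.map, Prod.mk.injEq] at hfix
    obtain ⟨h₃, h₂, -⟩ := hb q
    interval_cases r
    · exact hfix.1
    · exact hfix.2
    · rw [h₂]; exact hfix.2
    · rw [h₃]; exact hfix.1

theorem P_eq_of_inC {a : ℕ → α} {b : ℕ → β} (ha : InC a) (hb : InC b) (n : ℕ) :
    P a n = P b n := by
  induction n using Nat.strong_induction_on generalizing α β with
  | _ n ih =>
  have hderived : ∀ j, j ≤ 1 ∨ j < n → P (derivedSeq a) j = P (derivedSeq b) j := by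
    rintro j (hj | hj)
    · interval_cases j <;> simp [P_zero, P_one]
    · exact ih j hj ha.inC_derivedSeq hb.inC_derivedSeq
  rw [ha.isABBA.P_eq_blockLift, hb.isABBA.P_eq_blockLift]
  exact blockLift_congr (hderived _ (by omega)) (hderived _ (by omega))

end

theorem stmt9 {α : Type*} (a : ℕ → α) (hC : InC a) (k : ℕ) :
    P a (4 * k + 4) = P a (k + 1) ∧
    P a (4 * k + 3) = P a (4 * k + 4) + 1 ∧
    (P a (4 * k + 2) - P a (4 * k + 4) = 1 ∨ P a (4 * k + 2) - P a (4 * k + 4) = 2) ∧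
    (P a (4 * k + 1) - P a (4 * k + 4) = 0 ∨ P a (4 * k + 1) - P a (4 * k + 4) = 1 ∨
      P a (4 * k + 1) - P a (4 * k + 4) = 2) := by
  have hup := P_succ_le (derivedSeq a) k
  have hdown := P_le_P_succ_add_one (derivedSeq a) k
  rw [P_eq_of_inC hC hC.inC_derivedSeq (k + 1), show 4 * k + 4 = 4 * (k + 1) by ring]
  simp only [hC.isABBA.P_eq_blockLift, blockLift_four_mul, blockLift_four_mul_add_one,
    blockLift_four_mul_add_two, blockLift_four_mul_add_three, true_and]
  omega
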